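/- arXiv:2010.14666 — 4 statements merged into one kernel-verified Lean document; each statement's English description precedes it below -/
import Mathlib

section
/- Let X(t) solve the lifted system Ẋ = DL_X Λ(φ(X, ξ°), u(t)) with φ(X(0), ξ°) = ξ(0), where Λ is a lift satisfying D_{E|id} φ_ξ(E)[Λ(ξ, u)] = f_u(ξ). Then ξ(t) := φ(X(t), ξ°) solves the original system ξ̇ = f_{u(t)}(ξ). -/
open Manifold

/-- If `X(t)` solves the lifted system `Ẋ = DL_X Λ(φ(X, ξ0), u(t))`, where `Λ` is a lift
satisfying `D_{E|id} φ_ξ(E)[Λ(ξ, u)] = f_u(ξ)`, then `ξ(t) := φ(X(t), ξ0)` solves the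
original system `ξ̇ = f_{u(t)}(ξ)`. -/
theorem lifted_system_projects
    {E : Type*} [NormedAddCommGroup E] [NormedSpace ℝ E]
    {H : Type*} [TopologicalSpace H] (I : ModelWithCorners ℝ E H)
    {M : Type*} [TopologicalSpace M] [ChartedSpace H M] [IsManifold I (⊤ : ℕ∞) M]
    {E' : Type*} [NormedAddCommGroup E'] [NormedSpace ℝ E']
    {H' : Type*} [TopologicalSpace H'] (I' : ModelWithCorners ℝ E' H')
    {G : Type*} [TopologicalSpace G] [ChartedSpace H' G] [Group G] [LieGroup I' (⊤ : ℕ∞) G]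
    {𝕃 : Type*} [AddCommGroup 𝕃] [Module ℝ 𝕃]
    (φ : G → M → M)
    (hφ_smooth : ContMDiff (I'.prod I) I (⊤ : ℕ∞) (fun p : G × M => φ p.1 p.2))
    (hφ_id : ∀ ξ : M, φ 1 ξ = ξ)
    (hφ_comp : ∀ (X Y : G) (ξ : M), φ Y (φ X ξ) = φ (X * Y) ξ)
    (hφ_trans : ∀ ξ ξ' : M, ∃ X : G, φ X ξ = ξ')
    -- the kinematic system function
    (f : 𝕃 → ∀ x : M, TangentSpace I x)
    -- the lift `Λ : M × 𝕃 → 𝔤`, with the Lie algebra `𝔤 = T₁G` identified with `E'`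
    (Λ : M → 𝕃 → TangentSpace I' (1 : G))
    (hlift : ∀ (ξ : M) (v : 𝕃),
      mfderiv I' I (fun X : G => φ X ξ) (1 : G) (Λ ξ v) = f v ξ)
    -- the fixed origin, the input signal, and the lifted-system trajectory
    (ξ0 : M) (u : ℝ → 𝕃) (X : ℝ → G)
    (hXdiff : MDifferentiable (𝓘(ℝ, ℝ)) I' X)
    (hX : ∀ t : ℝ, mfderiv (𝓘(ℝ, ℝ)) I' X t (1 : ℝ) =
      mfderiv I' I' (fun Y : G => X t * Y) (1 : G) (Λ (φ (X t) ξ0) (u t)))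
    -- the initial condition of the projected trajectory
    (ξinit : M) (hinit : φ (X 0) ξ0 = ξinit) :
    (fun t => φ (X t) ξ0) 0 = ξinit ∧
    ∀ t : ℝ, mfderiv (𝓘(ℝ, ℝ)) I (fun s => φ (X s) ξ0) t (1 : ℝ) =
      f (u t) (φ (X t) ξ0) := by
  refine ⟨hinit, fun t => ?_⟩
  set ξ := φ (X t) ξ0 with hξ
  have hg : ContMDiff I' I (⊤ : ℕ∞) (fun Y : G => φ Y ξ0) :=
    hφ_smooth.comp (contMDiff_id.prodMk contMDiff_const)
  have hgd : MDifferentiableAt I' I (fun Y : G => φ Y ξ0) (X t) :=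
    (hg (X t)).mdifferentiableAt (by simp)
  have hL : ContMDiff I' I' (⊤ : ℕ∞) (fun Y : G => X t * Y) := contMDiff_mul_left
  have hcomp : mfderiv (𝓘(ℝ, ℝ)) I (fun s => φ (X s) ξ0) t =
      (mfderiv I' I (fun Y : G => φ Y ξ0) (X t)).comp (mfderiv (𝓘(ℝ, ℝ)) I' X t) :=
    mfderiv_comp t hgd (hXdiff t)
  have hcomp2 : mfderiv I' I ((fun Y : G => φ Y ξ0) ∘ (fun Y : G => X t * Y)) (1 : G) =
      (mfderiv I' I (fun Y : G => φ Y ξ0) (X t)).comp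
        (mfderiv I' I' (fun Y : G => X t * Y) (1 : G)) := by
    rw [mfderiv_comp_of_eq ((hg (X t)).mdifferentiableAt (by simp))
      ((hL (1 : G)).mdifferentiableAt (by simp)) (mul_one _)]
    congr 1
    exact mfderiv_congr_point (mul_one _)
  have hfun : ((fun Y : G => φ Y ξ0) ∘ (fun Y : G => X t * Y)) = fun Y : G => φ Y ξ := by
    funext Y
    simp only [Function.comp, hξ, hφ_comp]
  rw [hcomp]
  change mfderiv I' I (fun Y : G => φ Y ξ0) (X t) (mfderiv (𝓘(ℝ, ℝ)) I' X t (1 : ℝ)) = _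
  rw [hX t]
  have key : mfderiv I' I (fun Y : G => φ Y ξ0) (X t)
        (mfderiv I' I' (fun Y : G => X t * Y) (1 : G) (Λ ξ (u t)))
      = mfderiv I' I (fun Y : G => φ Y ξ) (1 : G) (Λ ξ (u t)) := by
    rw [← hfun, hcomp2]
    rfl
  rw [key, hlift]
end

section
/- Let E := X X̂^{-1} where X solves the lifted system and X̂ solves the observer equation dX̂/dt = DL_{X̂} Λ(φ(X̂, ξ°), u) + DR_{X̂} Δ. If the lift Λ is equivariant (Λ(φ(X,ξ), ψ(X,u)) = Ad_{X^{-1}} Λ(ξ,u)), then Ė = DL_E ( Λ(φ(E, ξ°), ψ(X̂^{-1}, u)) − Λ(ξ°, ψ(X̂^{-1}, u)) ) − DL_E Δ. -/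
open Manifold

section Helpers
variable {E' : Type*} [NormedAddCommGroup E'] [NormedSpace ℝ E']
  {H' : Type*} [TopologicalSpace H'] {I' : ModelWithCorners ℝ E' H'}
  {G : Type*} [TopologicalSpace G] [ChartedSpace H' G] [Group G] [LieGroup I' (⊤ : ℕ∞) G]

/-- chain rule for smooth self-maps of `G`, with an adjusted base point -/
theorem ged_comp (f g : G → G) (hf : ContMDiff I' I' (⊤ : ℕ∞) f) (hg : ContMDiff I' I' (⊤ : ℕ∞) g)
    (x y : G) (hxy : f x = y) (v : TangentSpace I' x) :
    mfderiv I' I' (fun z => g (f z)) x v = mfderiv I' I' g y (mfderiv I' I' f x v) := by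
  subst hxy
  rw [show (fun z => g (f z)) = g ∘ f from rfl,
    mfderiv_comp (I := I') (I' := I') (I'' := I') x
      (hg.mdifferentiableAt (by simp)) (hf.mdifferentiableAt (by simp))]
  rfl

/-- product rule for curves in a Lie group -/
theorem ged_curve_mul (c d : ℝ → G) (t : ℝ)
    (hc : MDifferentiableAt 𝓘(ℝ, ℝ) I' c t) (hd : MDifferentiableAt 𝓘(ℝ, ℝ) I' d t) :
    mfderiv 𝓘(ℝ, ℝ) I' (fun s => c s * d s) t (1 : ℝ) =
      (show E' from mfderiv I' I' (fun x => x * d t) (c t) (mfderiv 𝓘(ℝ, ℝ) I' c t (1 : ℝ))) +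
      (show E' from mfderiv I' I' (fun x => c t * x) (d t) (mfderiv 𝓘(ℝ, ℝ) I' d t (1 : ℝ))) := by
  have hmul : MDifferentiableAt (I'.prod I') I' (fun p : G × G => p.1 * p.2) (c t, d t) :=
    (contMDiff_mul I' (⊤ : ℕ∞)).mdifferentiableAt (by simp)
  have hpair : MDifferentiableAt 𝓘(ℝ, ℝ) (I'.prod I') (fun s => (c s, d s)) t :=
    hc.prodMk hd
  have h1 : mfderiv 𝓘(ℝ, ℝ) I' (fun s => c s * d s) t (1 : ℝ) =
      mfderiv (I'.prod I') I' (fun p : G × G => p.1 * p.2) (c t, d t)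
        (mfderiv 𝓘(ℝ, ℝ) (I'.prod I') (fun s => (c s, d s)) t (1 : ℝ)) :=
    mfderiv_comp_apply t hmul hpair (1 : ℝ)
  have h2 : mfderiv 𝓘(ℝ, ℝ) (I'.prod I') (fun s => (c s, d s)) t (1 : ℝ) =
      (mfderiv 𝓘(ℝ, ℝ) I' c t (1 : ℝ), mfderiv 𝓘(ℝ, ℝ) I' d t (1 : ℝ)) := by
    rw [hc.mfderiv_prod hd]; rfl
  rw [h1, h2]; exact mfderiv_prod_eq_add_apply hmul

/-- relation defining the derivative of inversion -/
theorem ged_inv_rel (b : G) (v : TangentSpace I' b) :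
    mfderiv I' I' (fun z : G => b * z) b⁻¹ (mfderiv I' I' (fun z : G => z⁻¹) b v) =
      - mfderiv I' I' (fun z : G => z * b⁻¹) b v := by
  have hmul : MDifferentiableAt (I'.prod I') I' (fun p : G × G => p.1 * p.2) (b, b⁻¹) :=
    (contMDiff_mul I' (⊤ : ℕ∞)).mdifferentiableAt (by simp)
  have hpair : MDifferentiableAt I' (I'.prod I') (fun x : G => (x, x⁻¹)) b :=
    mdifferentiableAt_id.prodMk ((contMDiff_inv I' (⊤ : ℕ∞)).mdifferentiableAt (by simp))
  have h0 : mfderiv I' I' (fun x : G => x * x⁻¹) b v = 0 := by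
    have : (fun x : G => x * x⁻¹) = fun _ : G => (1 : G) := funext fun x => mul_inv_cancel x
    rw [this, mfderiv_const]; rfl
  have h1 : mfderiv I' I' (fun x : G => x * x⁻¹) b v =
      mfderiv (I'.prod I') I' (fun p : G × G => p.1 * p.2) (b, b⁻¹)
        (mfderiv I' (I'.prod I') (fun x : G => (x, x⁻¹)) b v) :=
    mfderiv_comp_apply b hmul hpair v
  have hprod := MDifferentiableAt.mfderiv_prod (I := I') (I' := I') (I'' := I')
      (f := fun x : G => x) (g := fun x : G => x⁻¹) (x := b)
      mdifferentiableAt_id ((contMDiff_inv I' (⊤ : ℕ∞)).mdifferentiableAt (by simp))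
  have hidv : mfderiv I' I' (fun x : G => x) b v = v := by
    rw [show (fun x : G => x) = (id : G → G) from rfl, mfderiv_id]; rfl
  have h2 : mfderiv I' (I'.prod I') (fun x : G => (x, x⁻¹)) b v =
      (v, mfderiv I' I' (fun z : G => z⁻¹) b v) := by
    rw [hprod]
    exact congrArg₂ Prod.mk hidv rfl
  rw [h1, h2] at h0
  have h0 := (mfderiv_prod_eq_add_apply hmul).symm.trans h0
  have h0' : mfderiv I' I' (fun z : G => z * b⁻¹) b v +
      mfderiv I' I' (fun z : G => b * z) b⁻¹ (mfderiv I' I' (fun z : G => z⁻¹) b v) = 0 := h0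
  exact eq_neg_of_add_eq_zero_right h0' 
end Helpers


/-- Let `E := X * X̂⁻¹` where `X` solves the lifted system and `X̂` solves the observer
equation `dX̂/dt = DL_X̂ Λ(φ(X̂, ξ0), u) + DR_X̂ Δ`.  If the lift `Λ` is equivariant
(`Λ(φ(X,ξ), ψ(X,u)) = Ad_{X⁻¹} Λ(ξ,u)`), then
`Ė = DL_E ( Λ(φ(E, ξ0), ψ(X̂⁻¹, u)) − Λ(ξ0, ψ(X̂⁻¹, u)) ) − DL_E Δ`. -/
theorem group_error_dynamics
    {E : Type*} [NormedAddCommGroup E] [NormedSpace ℝ E]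
    {H : Type*} [TopologicalSpace H] (I : ModelWithCorners ℝ E H)
    {M : Type*} [TopologicalSpace M] [ChartedSpace H M] [IsManifold I (⊤ : ℕ∞) M]
    {E' : Type*} [NormedAddCommGroup E'] [NormedSpace ℝ E']
    {H' : Type*} [TopologicalSpace H'] (I' : ModelWithCorners ℝ E' H')
    {G : Type*} [TopologicalSpace G] [ChartedSpace H' G] [Group G] [LieGroup I' (⊤ : ℕ∞) G]
    {𝕃 : Type*} [AddCommGroup 𝕃] [Module ℝ 𝕃]
    -- the state action and its properties
    (φ : G → M → M)
    (hφ_smooth : ContMDiff (I'.prod I) I (⊤ : ℕ∞) (fun p : G × M => φ p.1 p.2))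
    (hφ_id : ∀ ξ : M, φ 1 ξ = ξ)
    (hφ_comp : ∀ (X Y : G) (ξ : M), φ Y (φ X ξ) = φ (X * Y) ξ)
    (hφ_trans : ∀ ξ ξ' : M, ∃ X : G, φ X ξ = ξ')
    -- the input action
    (ψ : G → 𝕃 → 𝕃)
    (hψ_id : ∀ u : 𝕃, ψ 1 u = u)
    (hψ_comp : ∀ (X Y : G) (u : 𝕃), ψ Y (ψ X u) = ψ (X * Y) u)
    -- the kinematic system function and the lift
    (f : 𝕃 → ∀ x : M, TangentSpace I x)
    (Λ : M → 𝕃 → TangentSpace I' (1 : G))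
    (hlift : ∀ (ξ : M) (v : 𝕃),
      mfderiv I' I (fun X : G => φ X ξ) (1 : G) (Λ ξ v) = f v ξ)
    -- equivariance of the lift: `Λ(φ(X,ξ), ψ(X,u)) = Ad_{X⁻¹} Λ(ξ,u)`,
    -- where `Ad_A = D_{Z|id}(A * Z * A⁻¹)`
    (hΛ_equivariant : ∀ (X : G) (ξ : M) (v : 𝕃),
      Λ (φ X ξ) (ψ X v) =
        mfderiv I' I' (fun Z : G => X⁻¹ * Z * X) (1 : G) (Λ ξ v))
    -- the origin, the input signal, and the correction term
    (ξ0 : M) (u : ℝ → 𝕃) (Δ : ℝ → TangentSpace I' (1 : G))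
    -- `X` solves the lifted system
    (X : ℝ → G)
    (hXdiff : MDifferentiable (𝓘(ℝ, ℝ)) I' X)
    (hX : ∀ t : ℝ, mfderiv (𝓘(ℝ, ℝ)) I' X t (1 : ℝ) =
      mfderiv I' I' (fun Y : G => X t * Y) (1 : G) (Λ (φ (X t) ξ0) (u t)))
    -- `X̂` solves the observer equation
    (Xhat : ℝ → G)
    (hXhatdiff : MDifferentiable (𝓘(ℝ, ℝ)) I' Xhat)
    (hXhat : ∀ t : ℝ, mfderiv (𝓘(ℝ, ℝ)) I' Xhat t (1 : ℝ) =
      (show E' from mfderiv I' I' (fun Y : G => Xhat t * Y) (1 : G) (Λ (φ (Xhat t) ξ0) (u t)) ) +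
      (show E' from mfderiv I' I' (fun Y : G => Y * Xhat t) (1 : G) (Δ t) )) :
    ∀ t : ℝ, mfderiv (𝓘(ℝ, ℝ)) I' (fun s => X s * (Xhat s)⁻¹) t (1 : ℝ) =
      (show E' from mfderiv I' I' (fun Z : G => (X t * (Xhat t)⁻¹) * Z) (1 : G)
        (Λ (φ (X t * (Xhat t)⁻¹) ξ0) (ψ (Xhat t)⁻¹ (u t)) -
          Λ ξ0 (ψ (Xhat t)⁻¹ (u t))) ) -
      (show E' from mfderiv I' I' (fun Z : G => (X t * (Xhat t)⁻¹) * Z) (1 : G) (Δ t) ) := by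
  intro t
  set a : G := X t with ha
  set b : G := Xhat t with hb
  set e : G := a * b⁻¹ with he
  set w : 𝕃 := ψ b⁻¹ (u t) with hw
  set lam : E' := Λ (φ a ξ0) (u t) with hlam
  set lamh : E' := Λ (φ b ξ0) (u t) with hlamh
  set Δt : E' := Δ t with hΔt
  set P : E' := Λ (φ e ξ0) w with hP
  set Q : E' := Λ ξ0 w with hQ
  -- derivatives of the curves
  set xdot : E' := mfderiv (𝓘(ℝ, ℝ)) I' X t (1 : ℝ) with hxdot
  set bdot : E' := mfderiv (𝓘(ℝ, ℝ)) I' Xhat t (1 : ℝ) with hbdot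
  have hinv_diff : MDifferentiableAt 𝓘(ℝ, ℝ) I' (fun s => (Xhat s)⁻¹) t :=
    ((contMDiff_inv I' (⊤ : ℕ∞)).mdifferentiableAt (by simp)).comp t (hXhatdiff t)
  -- product rule
  have hE : mfderiv 𝓘(ℝ, ℝ) I' (fun s => X s * (Xhat s)⁻¹) t (1 : ℝ) =
      (show E' from mfderiv I' I' (fun x => x * b⁻¹) a xdot) +
      (show E' from mfderiv I' I' (fun x => a * x) b⁻¹
        (mfderiv 𝓘(ℝ, ℝ) I' (fun s => (Xhat s)⁻¹) t (1 : ℝ))) :=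
    ged_curve_mul X (fun s => (Xhat s)⁻¹) t (hXdiff t) hinv_diff
  -- derivative of the inverted curve
  have hdinv : mfderiv 𝓘(ℝ, ℝ) I' (fun s => (Xhat s)⁻¹) t (1 : ℝ) =
      mfderiv I' I' (fun z : G => z⁻¹) b bdot := by
    rw [show (fun s => (Xhat s)⁻¹) = (fun z : G => z⁻¹) ∘ Xhat from rfl,
      mfderiv_comp t ((contMDiff_inv I' (⊤ : ℕ∞)).mdifferentiableAt (by simp)) (hXhatdiff t)]
    rfl
  -- first term:  DR_{b⁻¹} DL_a lam = DL_e P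
  have t1a : mfderiv I' I' (fun x => x * b⁻¹) a (mfderiv I' I' (fun z : G => a * z) 1 lam) =
      mfderiv I' I' (fun z : G => a * z * b⁻¹) 1 lam :=
    (ged_comp (fun z : G => a * z) (fun x : G => x * b⁻¹)
      contMDiff_mul_left contMDiff_mul_right 1 a (mul_one a) lam).symm
  have hconj_smooth : ContMDiff I' I' (⊤ : ℕ∞) (fun z : G => b * z * b⁻¹) :=
    contMDiff_mul_right.comp contMDiff_mul_left
  have t1b : mfderiv I' I' (fun z : G => a * z * b⁻¹) 1 lam =
      mfderiv I' I' (fun x : G => e * x) 1 (mfderiv I' I' (fun z : G => b * z * b⁻¹) 1 lam) := by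
    have hfun : (fun z : G => e * (b * z * b⁻¹)) = fun z : G => a * z * b⁻¹ := by
      funext z; rw [he]; group
    have := ged_comp (fun z : G => b * z * b⁻¹) (fun x : G => e * x)
      hconj_smooth contMDiff_mul_left 1 1 (by simp) lam
    rw [show (fun z : G => e * (b * z * b⁻¹)) = fun z : G => a * z * b⁻¹ from hfun] at this
    exact this
  -- equivariance identities
  have hAd1 : mfderiv I' I' (fun z : G => b * z * b⁻¹) 1 lam = P := by
    have h := hΛ_equivariant b⁻¹ (φ a ξ0) (u t)
    rw [inv_inv, hφ_comp] at h
    exact h.symm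
  have hAd2 : mfderiv I' I' (fun z : G => b * z * b⁻¹) 1 lamh = Q := by
    have h := hΛ_equivariant b⁻¹ (φ b ξ0) (u t)
    rw [inv_inv, hφ_comp, mul_inv_cancel, hφ_id] at h
    exact h.symm
  -- second term
  have t2a : mfderiv I' I' (fun x : G => a * x) b⁻¹ (mfderiv I' I' (fun z : G => z⁻¹) b bdot) =
      mfderiv I' I' (fun x : G => e * x) 1
        (mfderiv I' I' (fun z : G => b * z) b⁻¹ (mfderiv I' I' (fun z : G => z⁻¹) b bdot)) := by
    have hfun : (fun z : G => e * (b * z)) = fun z : G => a * z := by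
      funext z; rw [he]; group
    have := ged_comp (fun z : G => b * z) (fun x : G => e * x)
      contMDiff_mul_left contMDiff_mul_left b⁻¹ 1 (by simp)
      (mfderiv I' I' (fun z : G => z⁻¹) b bdot)
    rw [show (fun z : G => e * (b * z)) = fun z : G => a * z from hfun] at this
    exact this
  have t2b : mfderiv I' I' (fun z : G => b * z) b⁻¹ (mfderiv I' I' (fun z : G => z⁻¹) b bdot) =
      - mfderiv I' I' (fun z : G => z * b⁻¹) b bdot := ged_inv_rel b bdot
  -- unpack bdot via the observer equation
  have hbdot_eq : bdot =
      (show E' from mfderiv I' I' (fun z : G => b * z) 1 lamh) +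
      (show E' from mfderiv I' I' (fun z : G => z * b) 1 Δt) := hXhat t
  have t3a : mfderiv I' I' (fun z : G => z * b⁻¹) b (mfderiv I' I' (fun z : G => b * z) 1 lamh) =
      mfderiv I' I' (fun z : G => b * z * b⁻¹) 1 lamh :=
    (ged_comp (fun z : G => b * z) (fun x : G => x * b⁻¹)
      contMDiff_mul_left contMDiff_mul_right 1 b (mul_one b) lamh).symm
  have t3b : mfderiv I' I' (fun z : G => z * b⁻¹) b (mfderiv I' I' (fun z : G => z * b) 1 Δt) =
      Δt := by
    have h1 := ged_comp (I' := I') (fun z : G => z * b) (fun x : G => x * b⁻¹)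
      contMDiff_mul_right contMDiff_mul_right 1 b (one_mul b) Δt
    rw [show (fun z : G => z * b * b⁻¹) = fun z : G => z from by funext z; group] at h1
    rw [← h1, show (fun z : G => z) = (id : G → G) from rfl, mfderiv_id]
    rfl
  -- assemble
  have hsplit : mfderiv I' I' (fun z : G => z * b⁻¹) b bdot = Q + Δt := by
    rw [hbdot_eq]
    dsimp only
    exact (ContinuousLinearMap.map_add _ _ _).trans (by rw [t3b, t3a, hAd2]; rfl)
  have hxdot_eq : xdot = mfderiv I' I' (fun z : G => a * z) 1 lam := hX t
  rw [hE, hxdot_eq, t1a, t1b, hAd1, hdinv, t2a, t2b, hsplit]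
  have hmapsub := (mfderiv I' I' (fun x : G => e * x) (1 : G)).map_sub (P - Q) Δt
  have hmapsub2 := (mfderiv I' I' (fun x : G => e * x) (1 : G)).map_neg (Q + Δt)
  calc mfderiv I' I' (fun x : G => e * x) 1 P +
        mfderiv I' I' (fun x : G => e * x) 1 (-(Q + Δt))
      = mfderiv I' I' (fun x : G => e * x) 1 P -
        mfderiv I' I' (fun x : G => e * x) 1 (Q + Δt) := by rw [sub_eq_add_neg]; exact congrArg₂ (· + ·) rfl hmapsub2
    _ = mfderiv I' I' (fun x : G => e * x) 1 (P - (Q + Δt)) := by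
        exact (ContinuousLinearMap.map_sub _ _ _).symm
    _ = mfderiv I' I' (fun x : G => e * x) 1 ((P - Q) - Δt) := by
        congr 1; abel
    _ = mfderiv I' I' (fun x : G => e * x) 1 (P - Q) -
        mfderiv I' I' (fun x : G => e * x) 1 Δt := ContinuousLinearMap.map_sub _ _ _
end

section
/- With origin velocity u° := ψ(X̂^{-1}, u), the global error e := φ(X̂^{-1}, ξ) evolves according to ė = Dφ_e ( Λ(e, u°) − Λ(ξ°, u°) − Δ ), so the error dynamics depend only on e, u°, and Δ. -/
open Manifold

section Helpers

variable {𝕜 : Type*} [NontriviallyNormedField 𝕜]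
  {E₁ : Type*} [NormedAddCommGroup E₁] [NormedSpace 𝕜 E₁]
  {H₁ : Type*} [TopologicalSpace H₁] {I₁ : ModelWithCorners 𝕜 E₁ H₁}
  {M₁ : Type*} [TopologicalSpace M₁] [ChartedSpace H₁ M₁]
  {E₂ : Type*} [NormedAddCommGroup E₂] [NormedSpace 𝕜 E₂]
  {H₂ : Type*} [TopologicalSpace H₂] {I₂ : ModelWithCorners 𝕜 E₂ H₂}
  {M₂ : Type*} [TopologicalSpace M₂] [ChartedSpace H₂ M₂]
  {E₃ : Type*} [NormedAddCommGroup E₃] [NormedSpace 𝕜 E₃]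
  {H₃ : Type*} [TopologicalSpace H₃] {I₃ : ModelWithCorners 𝕜 E₃ H₃}
  {M₃ : Type*} [TopologicalSpace M₃] [ChartedSpace H₃ M₃]

lemma mfderiv_comp_apply' (f : M₁ → M₂) (g : M₂ → M₃) (x : M₁)
    (hg : MDifferentiableAt I₂ I₃ g (f x)) (hf : MDifferentiableAt I₁ I₂ f x)
    (v : TangentSpace I₁ x) :
    mfderiv I₁ I₃ (fun y => g (f y)) x v = mfderiv I₂ I₃ g (f x) (mfderiv I₁ I₂ f x v) :=
  congrArg (fun L => L v) (mfderiv_comp x hg hf)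

lemma mfderiv_apply_congr_fun' {f f' : M₁ → M₂} (h : f = f') (x : M₁) (v : E₁) :
    @Eq E₂ (mfderiv I₁ I₂ f x v) (mfderiv I₁ I₂ f' x v) := by subst h; rfl

lemma mfderiv_apply_congr_pt' (f : M₁ → M₂) {x x' : M₁} (h : x = x') (v : E₁) :
    @Eq E₂ (mfderiv I₁ I₂ f x v) (mfderiv I₁ I₂ f x' v) := by subst h; rfl

end Helpers

lemma mfderiv_inv_one'
    {E' : Type*} [NormedAddCommGroup E'] [NormedSpace ℝ E']
    {H' : Type*} [TopologicalSpace H'] (I' : ModelWithCorners ℝ E' H')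
    {G : Type*} [TopologicalSpace G] [ChartedSpace H' G] [Group G] [LieGroup I' (⊤ : ℕ∞) G]
    (v : E') :
    @Eq E' (mfderiv I' I' (fun z : G => z⁻¹) (1 : G) v) (-v) := by
  obtain ⟨w, hw⟩ : ∃ w : E', @Eq E' (mfderiv I' I' (fun z : G => z⁻¹) (1 : G) v) w :=
    ⟨_, rfl⟩
  have hinv : MDifferentiableAt I' I' (fun z : G => z⁻¹) (1 : G) :=
    ((contMDiff_inv I' ((⊤ : ℕ∞) : WithTop ℕ∞)).mdifferentiable (by simp)) 1
  have hmul : MDifferentiableAt (I'.prod I') I' (fun p : G × G => p.1 * p.2)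
      ((1 : G), (1 : G)⁻¹) :=
    ((contMDiff_mul I' ((⊤ : ℕ∞) : WithTop ℕ∞)).mdifferentiable (by simp)) _
  have hpair : MDifferentiableAt I' (I'.prod I') (fun z : G => (z, z⁻¹)) (1 : G) :=
    mdifferentiableAt_id.prodMk hinv
  have h1 : @Eq E' (mfderiv I' I' (fun z : G => z * z⁻¹) (1 : G) v) 0 := by
    have h : (fun z : G => z * z⁻¹) = fun _ : G => (1 : G) := by funext z; simp
    rw [h, mfderiv_const]; rfl
  have hpd : mfderiv I' (I'.prod I') (fun z : G => (z, z⁻¹)) (1 : G) =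
      (mfderiv I' I' (fun z : G => z) (1 : G)).prod
        (mfderiv I' I' (fun z : G => z⁻¹) (1 : G)) :=
    mdifferentiableAt_id.mfderiv_prod hinv
  have harg : @Eq (E' × E') (mfderiv I' (I'.prod I') (fun z : G => (z, z⁻¹)) (1 : G) v)
      ((v, w)) := by
    rw [hpd, show (fun z : G => z) = (id : G → G) from rfl, mfderiv_id, ← hw]
    rfl
  have e1 : (fun z : G => z * (1 : G)⁻¹) = (id : G → G) := by funext z; simp
  have e2 : (fun z : G => (1 : G) * z) = (id : G → G) := by funext z; simp
  have h2 : @Eq E' (mfderiv I' I' (fun z : G => z * z⁻¹) (1 : G) v) (v + w) := by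
    calc (show E' from mfderiv I' I' (fun z : G => z * z⁻¹) (1 : G) v)
        = (show E' from mfderiv (I'.prod I') I' (fun p : G × G => p.1 * p.2) ((1 : G), (1 : G)⁻¹)
            (mfderiv I' (I'.prod I') (fun z : G => (z, z⁻¹)) (1 : G) v)) :=
          mfderiv_comp_apply' (fun z : G => (z, z⁻¹)) (fun p : G × G => p.1 * p.2) 1 hmul hpair v
      _ = (show E' from mfderiv (I'.prod I') I' (fun p : G × G => p.1 * p.2) ((1 : G), (1 : G)⁻¹)
            ((v, w) : TangentSpace (I'.prod I') ((1 : G), (1 : G)⁻¹))) := by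
          exact congrArg (fun y : E' × E' =>
            mfderiv (I'.prod I') I' (fun p : G × G => p.1 * p.2) ((1 : G), (1 : G)⁻¹) y) harg
      _ = @HAdd.hAdd E' E' E' _ (mfderiv I' I' (fun z : G => z * (1 : G)⁻¹) (1 : G) v)
            (mfderiv I' I' (fun z : G => (1 : G) * z) ((1 : G)⁻¹) w) :=
          mfderiv_prod_eq_add_apply hmul
      _ = v + w := by
          rw [mfderiv_apply_congr_fun' e1 (1 : G) v,
            mfderiv_apply_congr_fun' e2 ((1 : G)⁻¹) w, mfderiv_id, mfderiv_id]
          rfl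
  have h3 : v + w = 0 := by rw [← h2]; exact h1
  rw [hw]
  exact (neg_eq_of_add_eq_zero_right h3).symm

/-- With origin velocity `u° := ψ(X̂⁻¹, u)`, the global error `e := φ(X̂⁻¹, ξ)` evolves
according to `ė = Dφ_e ( Λ(e, u°) − Λ(ξ0, u°) − Δ )`: the error dynamics depend only on
`e`, `u°`, and the correction `Δ`. -/
theorem global_error_dynamics
    {E : Type*} [NormedAddCommGroup E] [NormedSpace ℝ E]
    {H : Type*} [TopologicalSpace H] (I : ModelWithCorners ℝ E H)
    {M : Type*} [TopologicalSpace M] [ChartedSpace H M] [IsManifold I (⊤ : ℕ∞) M]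
    {E' : Type*} [NormedAddCommGroup E'] [NormedSpace ℝ E']
    {H' : Type*} [TopologicalSpace H'] (I' : ModelWithCorners ℝ E' H')
    {G : Type*} [TopologicalSpace G] [ChartedSpace H' G] [Group G] [LieGroup I' (⊤ : ℕ∞) G]
    {𝕃 : Type*} [AddCommGroup 𝕃] [Module ℝ 𝕃]
    -- the state action and its properties
    (φ : G → M → M)
    (hφ_smooth : ContMDiff (I'.prod I) I (⊤ : ℕ∞) (fun p : G × M => φ p.1 p.2))
    (hφ_id : ∀ ξ : M, φ 1 ξ = ξ)
    (hφ_comp : ∀ (X Y : G) (ξ : M), φ Y (φ X ξ) = φ (X * Y) ξ)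
    (hφ_trans : ∀ ξ ξ' : M, ∃ X : G, φ X ξ = ξ')
    -- the input action
    (ψ : G → 𝕃 → 𝕃)
    (hψ_id : ∀ u : 𝕃, ψ 1 u = u)
    (hψ_comp : ∀ (X Y : G) (u : 𝕃), ψ Y (ψ X u) = ψ (X * Y) u)
    -- the kinematic system function, its equivariance, and the equivariant lift
    (f : 𝕃 → ∀ x : M, TangentSpace I x)
    (hequiv : ∀ (X : G) (u : 𝕃) (ξ : M),
      mfderiv I I (φ X) ξ (f u ξ) = f (ψ X u) (φ X ξ))
    (Λ : M → 𝕃 → TangentSpace I' (1 : G))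
    (hlift : ∀ (ξ : M) (v : 𝕃),
      mfderiv I' I (fun X : G => φ X ξ) (1 : G) (Λ ξ v) = f v ξ)
    (hΛ_equivariant : ∀ (X : G) (ξ : M) (v : 𝕃),
      Λ (φ X ξ) (ψ X v) =
        mfderiv I' I' (fun Z : G => X⁻¹ * Z * X) (1 : G) (Λ ξ v))
    -- the origin, the input signal, and the correction term
    (ξ0 : M) (u : ℝ → 𝕃) (Δ : ℝ → TangentSpace I' (1 : G))
    -- `ξ` is a trajectory of the system `ξ̇ = f_u(ξ)`
    (ξ : ℝ → M)
    (hξdiff : MDifferentiable (𝓘(ℝ, ℝ)) I ξ)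
    (hξ : ∀ t : ℝ, mfderiv (𝓘(ℝ, ℝ)) I ξ t (1 : ℝ) = f (u t) (ξ t))
    -- `X̂` solves the observer equation with `X̂(0) = id` and compatible initial conditions
    (Xhat : ℝ → G)
    (hXhatdiff : MDifferentiable (𝓘(ℝ, ℝ)) I' Xhat)
    (hXhat0 : Xhat 0 = 1)
    (hXhat : ∀ t : ℝ, mfderiv (𝓘(ℝ, ℝ)) I' Xhat t (1 : ℝ) =
      (show E' from mfderiv I' I' (fun Y : G => Xhat t * Y) (1 : G)
        (Λ (φ (Xhat t) ξ0) (u t))) +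
      (show E' from mfderiv I' I' (fun Y : G => Y * Xhat t) (1 : G) (Δ t))) :
    -- the error `e(t) = φ(X̂(t)⁻¹, ξ(t))` satisfies `ė = Dφ_e (Λ(e,u°) − Λ(ξ0,u°) − Δ)`,
    -- where `u°(t) = ψ(X̂(t)⁻¹, u(t))`
    ∀ t : ℝ, mfderiv (𝓘(ℝ, ℝ)) I (fun s => φ ((Xhat s)⁻¹) (ξ s)) t (1 : ℝ) =
      mfderiv I' I (fun Z : G => φ Z (φ ((Xhat t)⁻¹) (ξ t))) (1 : G)
        (Λ (φ ((Xhat t)⁻¹) (ξ t)) (ψ ((Xhat t)⁻¹) (u t)) -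
          Λ ξ0 (ψ ((Xhat t)⁻¹) (u t)) - Δ t) := by
  intro t
  -- differentiability facts
  have hφd : MDifferentiable (I'.prod I) I (fun p : G × M => φ p.1 p.2) :=
    hφ_smooth.mdifferentiable (by simp)
  have hφG : ∀ x : M, MDifferentiable I' I (fun z : G => φ z x) := fun x =>
    (hφ_smooth.comp (contMDiff_id.prodMk contMDiff_const)).mdifferentiable (by simp)
  have hinvd : MDifferentiable I' I' (fun z : G => z⁻¹) :=
    (contMDiff_inv I' ((⊤ : ℕ∞) : WithTop ℕ∞)).mdifferentiable (by simp)
  have hmulL : ∀ a : G, MDifferentiable I' I' (fun z : G => a * z) := fun a =>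
    (contMDiff_mul_left (n := ((⊤ : ℕ∞) : WithTop ℕ∞))).mdifferentiable (by simp)
  have hmulR : ∀ a : G, MDifferentiable I' I' (fun z : G => z * a) := fun a =>
    (contMDiff_mul_right (n := ((⊤ : ℕ∞) : WithTop ℕ∞))).mdifferentiable (by simp)
  have hY : MDifferentiable 𝓘(ℝ, ℝ) I' (fun s : ℝ => (Xhat s)⁻¹) := fun s =>
    (hinvd (Xhat s)).comp s (hXhatdiff s)
  have hconj : MDifferentiable I' I' (fun z : G => Xhat t * z * (Xhat t)⁻¹) :=
    (hmulR (Xhat t)⁻¹).comp (hmulL (Xhat t))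
  have hBmap : MDifferentiable I' I' (fun Z : G => Xhat t * Z⁻¹ * (Xhat t)⁻¹) :=
    hconj.comp hinvd
  have hLmap : MDifferentiable I' I' (fun Z : G => (Xhat t * Z)⁻¹) :=
    hinvd.comp (hmulL (Xhat t))
  have hRmap : MDifferentiable I' I' (fun Z : G => (Z * Xhat t)⁻¹) :=
    hinvd.comp (hmulR (Xhat t))
  -- function identities
  have hfun1 : (fun Z : G => φ ((Xhat t * Z)⁻¹) (ξ t)) =
      (fun Z : G => φ (Xhat t * Z⁻¹ * (Xhat t)⁻¹) (φ ((Xhat t)⁻¹) (ξ t))) := by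
    funext z
    rw [hφ_comp ((Xhat t)⁻¹) (Xhat t * z⁻¹ * (Xhat t)⁻¹) (ξ t)]
    congr 1
    group
  have hfun2 : (fun Z : G => φ ((Z * Xhat t)⁻¹) (ξ t)) =
      (fun Z : G => φ Z⁻¹ (φ ((Xhat t)⁻¹) (ξ t))) := by
    funext z
    rw [mul_inv_rev]
    exact (hφ_comp ((Xhat t)⁻¹) z⁻¹ (ξ t)).symm
  have hfun3 : (fun Z : G => ((Xhat t)⁻¹)⁻¹ * Z * (Xhat t)⁻¹) =
      (fun Z : G => Xhat t * Z * (Xhat t)⁻¹) := by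
    funext z; rw [inv_inv]
  -- the conjugated lift equals the lift at the origin
  have hξ0eq : φ ((Xhat t)⁻¹) (φ (Xhat t) ξ0) = ξ0 := by
    rw [hφ_comp (Xhat t) ((Xhat t)⁻¹) ξ0]
    simp [hφ_id]
  have hΛ0 : @Eq E' (mfderiv I' I' (fun Z : G => Xhat t * Z * (Xhat t)⁻¹) (1 : G)
        (Λ (φ (Xhat t) ξ0) (u t)))
      (Λ ξ0 (ψ ((Xhat t)⁻¹) (u t))) := by
    have h := hΛ_equivariant ((Xhat t)⁻¹) (φ (Xhat t) ξ0) (u t)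
    rw [hξ0eq] at h
    exact (mfderiv_apply_congr_fun' (I₁ := I') (I₂ := I') hfun3.symm (1 : G) ((Λ (φ (Xhat t) ξ0) (u t)) : E')).trans h.symm
  -- derivative of X̂⁻¹
  have haA : @Eq E' (mfderiv 𝓘(ℝ, ℝ) I' (fun s : ℝ => (Xhat s)⁻¹) t (1 : ℝ))
      (mfderiv I' I' (fun z : G => z⁻¹) (Xhat t) (mfderiv 𝓘(ℝ, ℝ) I' Xhat t (1 : ℝ))) :=
    mfderiv_comp_apply' Xhat (fun z : G => z⁻¹) t (hinvd _) (hXhatdiff t) (1 : ℝ)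
  have haA2 : @Eq E' (mfderiv 𝓘(ℝ, ℝ) I' (fun s : ℝ => (Xhat s)⁻¹) t (1 : ℝ))
      (mfderiv I' I' (fun z : G => z⁻¹) (Xhat t)
          (mfderiv I' I' (fun Y : G => Xhat t * Y) (1 : G) (Λ (φ (Xhat t) ξ0) (u t)))
        + mfderiv I' I' (fun z : G => z⁻¹) (Xhat t)
          (mfderiv I' I' (fun Y : G => Y * Xhat t) (1 : G) (Δ t))) := by
    rw [haA, hXhat t]
    exact map_add _ _ _
  -- decomposition of the derivative of the error
  have hc : MDifferentiableAt 𝓘(ℝ, ℝ) (I'.prod I)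
      (fun s : ℝ => (((Xhat s)⁻¹ : G), ξ s)) t := (hY t).prodMk (hξdiff t)
  have e_comp : @Eq E (mfderiv 𝓘(ℝ, ℝ) I (fun s => φ ((Xhat s)⁻¹) (ξ s)) t (1 : ℝ))
      (mfderiv (I'.prod I) I (fun p : G × M => φ p.1 p.2) (((Xhat t)⁻¹ : G), ξ t)
        (mfderiv 𝓘(ℝ, ℝ) (I'.prod I) (fun s : ℝ => (((Xhat s)⁻¹ : G), ξ s)) t (1 : ℝ))) :=
    mfderiv_comp_apply' (fun s : ℝ => (((Xhat s)⁻¹ : G), ξ s))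
      (fun p : G × M => φ p.1 p.2) t (hφd _) hc (1 : ℝ)
  have hv : mfderiv 𝓘(ℝ, ℝ) (I'.prod I) (fun s : ℝ => (((Xhat s)⁻¹ : G), ξ s)) t =
      (mfderiv 𝓘(ℝ, ℝ) I' (fun s : ℝ => (Xhat s)⁻¹) t).prod (mfderiv 𝓘(ℝ, ℝ) I ξ t) :=
    (hY t).mfderiv_prod (hξdiff t)
  have hv1 : @Eq (E' × E) (mfderiv 𝓘(ℝ, ℝ) (I'.prod I) (fun s : ℝ => (((Xhat s)⁻¹ : G), ξ s)) t (1 : ℝ))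
      ((mfderiv 𝓘(ℝ, ℝ) I' (fun s : ℝ => (Xhat s)⁻¹) t (1 : ℝ), mfderiv 𝓘(ℝ, ℝ) I ξ t (1 : ℝ))) := by
    rw [hv]; rfl
  have e_comp2 : @Eq E (mfderiv 𝓘(ℝ, ℝ) I (fun s => φ ((Xhat s)⁻¹) (ξ s)) t (1 : ℝ))
      (mfderiv (I'.prod I) I (fun p : G × M => φ p.1 p.2) (((Xhat t)⁻¹ : G), ξ t)
        ((mfderiv 𝓘(ℝ, ℝ) I' (fun s : ℝ => (Xhat s)⁻¹) t (1 : ℝ), mfderiv 𝓘(ℝ, ℝ) I ξ t (1 : ℝ)) :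
          TangentSpace (I'.prod I) (((Xhat t)⁻¹ : G), ξ t))) := by
    rw [e_comp]
    exact congrArg (fun y : E' × E =>
      mfderiv (I'.prod I) I (fun p : G × M => φ p.1 p.2) (((Xhat t)⁻¹ : G), ξ t) y) hv1
  have hsplit : @Eq E (mfderiv (I'.prod I) I (fun p : G × M => φ p.1 p.2)
        (((Xhat t)⁻¹ : G), ξ t)
        ((mfderiv 𝓘(ℝ, ℝ) I' (fun s : ℝ => (Xhat s)⁻¹) t (1 : ℝ), mfderiv 𝓘(ℝ, ℝ) I ξ t (1 : ℝ)) :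
          TangentSpace (I'.prod I) (((Xhat t)⁻¹ : G), ξ t)))
      (mfderiv I' I (fun z : G => φ z (ξ t)) ((Xhat t)⁻¹)
          (mfderiv 𝓘(ℝ, ℝ) I' (fun s : ℝ => (Xhat s)⁻¹) t (1 : ℝ))
        + mfderiv I I (fun x : M => φ ((Xhat t)⁻¹) x) (ξ t) (mfderiv 𝓘(ℝ, ℝ) I ξ t (1 : ℝ))) :=
    mfderiv_prod_eq_add_apply (hφd _)
  -- the transport term
  have hBterm : @Eq E (mfderiv I I (fun x : M => φ ((Xhat t)⁻¹) x) (ξ t)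
        (mfderiv 𝓘(ℝ, ℝ) I ξ t (1 : ℝ)))
      (mfderiv I' I (fun Z : G => φ Z (φ ((Xhat t)⁻¹) (ξ t))) (1 : G)
        (Λ (φ ((Xhat t)⁻¹) (ξ t)) (ψ ((Xhat t)⁻¹) (u t)))) := by
    rw [hξ t]
    exact (hequiv ((Xhat t)⁻¹) (u t) (ξ t)).trans (hlift _ _).symm
  -- the two correction pieces
  have hp1 : @Eq E (mfderiv I' I (fun z : G => φ z (ξ t)) ((Xhat t)⁻¹)
        (mfderiv I' I' (fun z : G => z⁻¹) (Xhat t)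
          (mfderiv I' I' (fun Y : G => Xhat t * Y) (1 : G) (Λ (φ (Xhat t) ξ0) (u t)))))
      (mfderiv I' I (fun Z : G => φ Z (φ ((Xhat t)⁻¹) (ξ t))) (1 : G)
        (-(Λ ξ0 (ψ ((Xhat t)⁻¹) (u t))))) := by
    calc (show E from mfderiv I' I (fun z : G => φ z (ξ t)) ((Xhat t)⁻¹)
          (mfderiv I' I' (fun z : G => z⁻¹) (Xhat t)
            (mfderiv I' I' (fun Y : G => Xhat t * Y) (1 : G) (Λ (φ (Xhat t) ξ0) (u t)))))
        = (show E from mfderiv I' I (fun z : G => φ z (ξ t)) ((Xhat t)⁻¹)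
            (mfderiv I' I' (fun z : G => z⁻¹) (Xhat t * 1)
              (mfderiv I' I' (fun Y : G => Xhat t * Y) (1 : G) (Λ (φ (Xhat t) ξ0) (u t))))) := by
          exact congrArg (fun y : E' => mfderiv I' I (fun z : G => φ z (ξ t)) ((Xhat t)⁻¹) y)
            (mfderiv_apply_congr_pt' (I₁ := I') (I₂ := I') (fun z : G => z⁻¹) (mul_one (Xhat t)).symm _)
      _ = (show E from mfderiv I' I (fun z : G => φ z (ξ t)) ((Xhat t)⁻¹)
            (mfderiv I' I' (fun Z : G => (Xhat t * Z)⁻¹) (1 : G) (Λ (φ (Xhat t) ξ0) (u t)))) := by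
          exact congrArg (fun y : E' => mfderiv I' I (fun z : G => φ z (ξ t)) ((Xhat t)⁻¹) y)
            (mfderiv_comp_apply' (fun Y : G => Xhat t * Y) (fun z : G => z⁻¹) (1 : G)
              (hinvd _) (hmulL (Xhat t) 1) (Λ (φ (Xhat t) ξ0) (u t))).symm
      _ = (show E from mfderiv I' I (fun z : G => φ z (ξ t)) ((Xhat t * 1)⁻¹)
            (mfderiv I' I' (fun Z : G => (Xhat t * Z)⁻¹) (1 : G) (Λ (φ (Xhat t) ξ0) (u t)))) :=
          mfderiv_apply_congr_pt' (I₁ := I') (I₂ := I) (fun z : G => φ z (ξ t))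
            (show (Xhat t)⁻¹ = (Xhat t * 1)⁻¹ by rw [mul_one]) _
      _ = (show E from mfderiv I' I (fun Z : G => φ ((Xhat t * Z)⁻¹) (ξ t)) (1 : G)
            (Λ (φ (Xhat t) ξ0) (u t))) :=
          (mfderiv_comp_apply' (fun Z : G => (Xhat t * Z)⁻¹) (fun z : G => φ z (ξ t)) (1 : G)
            (hφG (ξ t) _) (hLmap 1) (Λ (φ (Xhat t) ξ0) (u t))).symm
      _ = (show E from mfderiv I' I (fun Z : G => φ (Xhat t * Z⁻¹ * (Xhat t)⁻¹) (φ ((Xhat t)⁻¹) (ξ t)))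
            (1 : G) (Λ (φ (Xhat t) ξ0) (u t))) :=
          mfderiv_apply_congr_fun' (I₁ := I') (I₂ := I) hfun1 (1 : G) ((Λ (φ (Xhat t) ξ0) (u t)) : E')
      _ = (show E from mfderiv I' I (fun W : G => φ W (φ ((Xhat t)⁻¹) (ξ t)))
            (Xhat t * (1 : G)⁻¹ * (Xhat t)⁻¹)
            (mfderiv I' I' (fun Z : G => Xhat t * Z⁻¹ * (Xhat t)⁻¹) (1 : G)
              (Λ (φ (Xhat t) ξ0) (u t)))) :=
          mfderiv_comp_apply' (fun Z : G => Xhat t * Z⁻¹ * (Xhat t)⁻¹)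
            (fun W : G => φ W (φ ((Xhat t)⁻¹) (ξ t))) (1 : G)
            (hφG (φ ((Xhat t)⁻¹) (ξ t)) _) (hBmap 1) (Λ (φ (Xhat t) ξ0) (u t))
      _ = (show E from mfderiv I' I (fun W : G => φ W (φ ((Xhat t)⁻¹) (ξ t))) (1 : G)
            (mfderiv I' I' (fun Z : G => Xhat t * Z⁻¹ * (Xhat t)⁻¹) (1 : G)
              (Λ (φ (Xhat t) ξ0) (u t)))) :=
          mfderiv_apply_congr_pt' (I₁ := I') (I₂ := I) (fun W : G => φ W (φ ((Xhat t)⁻¹) (ξ t)))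
            (show Xhat t * (1 : G)⁻¹ * (Xhat t)⁻¹ = 1 by simp) _
      _ = (show E from mfderiv I' I (fun Z : G => φ Z (φ ((Xhat t)⁻¹) (ξ t))) (1 : G)
            (-(Λ ξ0 (ψ ((Xhat t)⁻¹) (u t))))) := by
          refine congrArg (fun y : E' =>
            mfderiv I' I (fun Z : G => φ Z (φ ((Xhat t)⁻¹) (ξ t))) (1 : G) y) ?_
          calc (show E' from mfderiv I' I' (fun Z : G => Xhat t * Z⁻¹ * (Xhat t)⁻¹) (1 : G)
                (Λ (φ (Xhat t) ξ0) (u t)))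
              = (show E' from mfderiv I' I' (fun W : G => Xhat t * W * (Xhat t)⁻¹) ((1 : G)⁻¹)
                  (mfderiv I' I' (fun z : G => z⁻¹) (1 : G) (Λ (φ (Xhat t) ξ0) (u t)))) :=
                mfderiv_comp_apply' (fun z : G => z⁻¹)
                  (fun W : G => Xhat t * W * (Xhat t)⁻¹) (1 : G)
                  (hconj _) (hinvd 1) (Λ (φ (Xhat t) ξ0) (u t))
            _ = (show E' from mfderiv I' I' (fun W : G => Xhat t * W * (Xhat t)⁻¹) (1 : G)
                  (mfderiv I' I' (fun z : G => z⁻¹) (1 : G) (Λ (φ (Xhat t) ξ0) (u t)))) :=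
                mfderiv_apply_congr_pt' (I₁ := I') (I₂ := I') (fun W : G => Xhat t * W * (Xhat t)⁻¹) inv_one _
            _ = (show E' from mfderiv I' I' (fun W : G => Xhat t * W * (Xhat t)⁻¹) (1 : G)
                  (-(Λ (φ (Xhat t) ξ0) (u t) : E'))) := by
                exact congrArg (fun y : E' =>
                  mfderiv I' I' (fun W : G => Xhat t * W * (Xhat t)⁻¹) (1 : G) y)
                  (mfderiv_inv_one' I' (Λ (φ (Xhat t) ξ0) (u t)))
            _ = (show E' from -(mfderiv I' I' (fun W : G => Xhat t * W * (Xhat t)⁻¹) (1 : G)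
                  (Λ (φ (Xhat t) ξ0) (u t)) : E')) := map_neg _ _
            _ = (show E' from -(Λ ξ0 (ψ ((Xhat t)⁻¹) (u t)) : E')) := congrArg Neg.neg hΛ0
  have hp2 : @Eq E (mfderiv I' I (fun z : G => φ z (ξ t)) ((Xhat t)⁻¹)
        (mfderiv I' I' (fun z : G => z⁻¹) (Xhat t)
          (mfderiv I' I' (fun Y : G => Y * Xhat t) (1 : G) (Δ t))))
      (mfderiv I' I (fun Z : G => φ Z (φ ((Xhat t)⁻¹) (ξ t))) (1 : G) (-(Δ t))) := by
    calc (show E from mfderiv I' I (fun z : G => φ z (ξ t)) ((Xhat t)⁻¹)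
          (mfderiv I' I' (fun z : G => z⁻¹) (Xhat t)
            (mfderiv I' I' (fun Y : G => Y * Xhat t) (1 : G) (Δ t))))
        = (show E from mfderiv I' I (fun z : G => φ z (ξ t)) ((Xhat t)⁻¹)
            (mfderiv I' I' (fun z : G => z⁻¹) (1 * Xhat t)
              (mfderiv I' I' (fun Y : G => Y * Xhat t) (1 : G) (Δ t)))) := by
          exact congrArg (fun y : E' => mfderiv I' I (fun z : G => φ z (ξ t)) ((Xhat t)⁻¹) y)
            (mfderiv_apply_congr_pt' (I₁ := I') (I₂ := I') (fun z : G => z⁻¹) (one_mul (Xhat t)).symm _)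
      _ = (show E from mfderiv I' I (fun z : G => φ z (ξ t)) ((Xhat t)⁻¹)
            (mfderiv I' I' (fun Z : G => (Z * Xhat t)⁻¹) (1 : G) (Δ t))) := by
          exact congrArg (fun y : E' => mfderiv I' I (fun z : G => φ z (ξ t)) ((Xhat t)⁻¹) y)
            (mfderiv_comp_apply' (fun Y : G => Y * Xhat t) (fun z : G => z⁻¹) (1 : G)
              (hinvd _) (hmulR (Xhat t) 1) (Δ t)).symm
      _ = (show E from mfderiv I' I (fun z : G => φ z (ξ t)) ((1 * Xhat t)⁻¹)
            (mfderiv I' I' (fun Z : G => (Z * Xhat t)⁻¹) (1 : G) (Δ t))) :=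
          mfderiv_apply_congr_pt' (I₁ := I') (I₂ := I) (fun z : G => φ z (ξ t))
            (show (Xhat t)⁻¹ = (1 * Xhat t)⁻¹ by rw [one_mul]) _
      _ = (show E from mfderiv I' I (fun Z : G => φ ((Z * Xhat t)⁻¹) (ξ t)) (1 : G) (Δ t)) :=
          (mfderiv_comp_apply' (fun Z : G => (Z * Xhat t)⁻¹) (fun z : G => φ z (ξ t)) (1 : G)
            (hφG (ξ t) _) (hRmap 1) (Δ t)).symm
      _ = (show E from mfderiv I' I (fun Z : G => φ Z⁻¹ (φ ((Xhat t)⁻¹) (ξ t))) (1 : G) (Δ t)) :=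
          mfderiv_apply_congr_fun' (I₁ := I') (I₂ := I) hfun2 (1 : G) ((Δ t) : E')
      _ = (show E from mfderiv I' I (fun W : G => φ W (φ ((Xhat t)⁻¹) (ξ t))) ((1 : G)⁻¹)
            (mfderiv I' I' (fun z : G => z⁻¹) (1 : G) (Δ t))) :=
          mfderiv_comp_apply' (fun z : G => z⁻¹)
            (fun W : G => φ W (φ ((Xhat t)⁻¹) (ξ t))) (1 : G)
            (hφG (φ ((Xhat t)⁻¹) (ξ t)) _) (hinvd 1) (Δ t)
      _ = (show E from mfderiv I' I (fun W : G => φ W (φ ((Xhat t)⁻¹) (ξ t))) (1 : G)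
            (mfderiv I' I' (fun z : G => z⁻¹) (1 : G) (Δ t))) :=
          mfderiv_apply_congr_pt' (I₁ := I') (I₂ := I) (fun W : G => φ W (φ ((Xhat t)⁻¹) (ξ t))) inv_one _
      _ = (show E from mfderiv I' I (fun Z : G => φ Z (φ ((Xhat t)⁻¹) (ξ t))) (1 : G) (-(Δ t))) := by
          exact congrArg (fun y : E' =>
            mfderiv I' I (fun Z : G => φ Z (φ ((Xhat t)⁻¹) (ξ t))) (1 : G) y)
            (mfderiv_inv_one' I' (Δ t))
  -- the G-part of the split
  have hA : @Eq E (mfderiv I' I (fun z : G => φ z (ξ t)) ((Xhat t)⁻¹)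
        (mfderiv 𝓘(ℝ, ℝ) I' (fun s : ℝ => (Xhat s)⁻¹) t (1 : ℝ)))
      (mfderiv I' I (fun Z : G => φ Z (φ ((Xhat t)⁻¹) (ξ t))) (1 : G)
          (-(Λ ξ0 (ψ ((Xhat t)⁻¹) (u t))))
        + mfderiv I' I (fun Z : G => φ Z (φ ((Xhat t)⁻¹) (ξ t))) (1 : G) (-(Δ t))) := by
    rw [haA2]
    rw [map_add (mfderiv I' I (fun z : G => φ z (ξ t)) ((Xhat t)⁻¹)) _ _]
    rw [hp1, hp2]
    rfl
  -- assembling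
  have final : @Eq E (mfderiv I' I (fun Z : G => φ Z (φ ((Xhat t)⁻¹) (ξ t))) (1 : G)
        (Λ (φ ((Xhat t)⁻¹) (ξ t)) (ψ ((Xhat t)⁻¹) (u t)) -
          Λ ξ0 (ψ ((Xhat t)⁻¹) (u t)) - Δ t))
      ((mfderiv I' I (fun Z : G => φ Z (φ ((Xhat t)⁻¹) (ξ t))) (1 : G)
          (-(Λ ξ0 (ψ ((Xhat t)⁻¹) (u t))))
        + mfderiv I' I (fun Z : G => φ Z (φ ((Xhat t)⁻¹) (ξ t))) (1 : G) (-(Δ t)))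
        + mfderiv I' I (fun Z : G => φ Z (φ ((Xhat t)⁻¹) (ξ t))) (1 : G)
          (Λ (φ ((Xhat t)⁻¹) (ξ t)) (ψ ((Xhat t)⁻¹) (u t)))) := by
    rw [show Λ (φ ((Xhat t)⁻¹) (ξ t)) (ψ ((Xhat t)⁻¹) (u t)) -
          Λ ξ0 (ψ ((Xhat t)⁻¹) (u t)) - Δ t =
        (-(Λ ξ0 (ψ ((Xhat t)⁻¹) (u t))) + -(Δ t)) +
          Λ (φ ((Xhat t)⁻¹) (ξ t)) (ψ ((Xhat t)⁻¹) (u t)) from by abel]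
    rw [map_add, map_add]
  calc (show E from mfderiv (𝓘(ℝ, ℝ)) I (fun s => φ ((Xhat s)⁻¹) (ξ s)) t (1 : ℝ))
      = (show E from mfderiv (I'.prod I) I (fun p : G × M => φ p.1 p.2) (((Xhat t)⁻¹ : G), ξ t)
          ((mfderiv 𝓘(ℝ, ℝ) I' (fun s : ℝ => (Xhat s)⁻¹) t (1 : ℝ), mfderiv 𝓘(ℝ, ℝ) I ξ t (1 : ℝ)) :
            TangentSpace (I'.prod I) (((Xhat t)⁻¹ : G), ξ t))) := e_comp2
    _ = (show E from mfderiv I' I (fun z : G => φ z (ξ t)) ((Xhat t)⁻¹)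
          (mfderiv 𝓘(ℝ, ℝ) I' (fun s : ℝ => (Xhat s)⁻¹) t (1 : ℝ))
        + mfderiv I I (fun x : M => φ ((Xhat t)⁻¹) x) (ξ t) (mfderiv 𝓘(ℝ, ℝ) I ξ t (1 : ℝ))) := hsplit
    _ = (show E from (mfderiv I' I (fun Z : G => φ Z (φ ((Xhat t)⁻¹) (ξ t))) (1 : G)
            (-(Λ ξ0 (ψ ((Xhat t)⁻¹) (u t))))
          + mfderiv I' I (fun Z : G => φ Z (φ ((Xhat t)⁻¹) (ξ t))) (1 : G) (-(Δ t)))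
        + mfderiv I' I (fun Z : G => φ Z (φ ((Xhat t)⁻¹) (ξ t))) (1 : G)
            (Λ (φ ((Xhat t)⁻¹) (ξ t)) (ψ ((Xhat t)⁻¹) (u t)))) := by rw [hA, hBterm]; rfl
    _ = (show E from mfderiv I' I (fun Z : G => φ Z (φ ((Xhat t)⁻¹) (ξ t))) (1 : G)
          (Λ (φ ((Xhat t)⁻¹) (ξ t)) (ψ ((Xhat t)⁻¹) (u t)) -
            Λ ξ0 (ψ ((Xhat t)⁻¹) (u t)) - Δ t)) := final.symm
end

section
/- For an equivariant output, the output residual ỹ(ε) = h(φ(exp(ε∧)X̂, ξ°)) − h(φ(X̂, ξ°)) admits the second-order-accurate linearisation ỹ = (1/2)( D_{E|id}ρ(E, y) + D_{E|id}ρ(E, ŷ) ) Ad_{X̂^{-1}} ε∧ + O(|ε|³), where y = h(ξ) and ŷ = h(φ(X̂, ξ°)). -/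
open Asymptotics Topology

/-- Trapezoidal-rule estimate: for a smooth map `g`, the residual
`g u - g 0 - (1/2)(Dg(u) u + Dg(0) u)` is `O(‖u‖³)` at `0`. -/
theorem trapezoid_isBigO {E F : Type*} [NormedAddCommGroup E] [NormedSpace ℝ E]
    [NormedAddCommGroup F] [NormedSpace ℝ F] {g : E → F} (hg : ContDiff ℝ (⊤ : ℕ∞) g) :
    (fun u : E => g u - g 0 - (1 / 2 : ℝ) • (fderiv ℝ g u u + fderiv ℝ g 0 u))
      =O[𝓝 0] (fun u => ‖u‖ ^ 3) := by
  set D1 := fderiv ℝ g with hD1def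
  have hgd : ∀ x, HasFDerivAt g (D1 x) x := fun x =>
    (hg.differentiable (by simp) x).hasFDerivAt
  have hD1 : ContDiff ℝ (⊤ : ℕ∞) D1 := hg.fderiv_right (by simp)
  set D2 := fderiv ℝ D1 with hD2def
  have hD1d : ∀ x, HasFDerivAt D1 (D2 x) x := fun x =>
    (hD1.differentiable (by simp) x).hasFDerivAt
  have hD2 : ContDiff ℝ (⊤ : ℕ∞) D2 := hD1.fderiv_right (by simp)
  set D3 := fderiv ℝ D2 with hD3def
  have hD2d : ∀ x, HasFDerivAt D2 (D3 x) x := fun x =>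
    (hD2.differentiable (by simp) x).hasFDerivAt
  have hD3c : Continuous D3 := (hD2.fderiv_right (m := 1) (WithTop.coe_le_coe.mpr le_top)).continuous
  letI : SeminormedAddCommGroup (E →L[ℝ] E →L[ℝ] E →L[ℝ] F) :=
    @ContinuousLinearMap.toSeminormedAddCommGroup ℝ ℝ E (E →L[ℝ] E →L[ℝ] F) _
      NormedAddCommGroup.toSeminormedAddCommGroup _ _ _ _ (RingHom.id ℝ) _
  set C : ℝ := ‖D3 0‖ + 1 with hCdef
  have hCpos : 0 < C := by positivity
  -- a closed ball where `‖D3‖ ≤ C`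
  obtain ⟨r, hr, hball⟩ : ∃ r > 0, ∀ x ∈ Metric.ball (0 : E) r, ‖D3 x‖ < C := by
    have h1 : ∀ᶠ x in 𝓝 (0 : E), ‖D3 x‖ < C := by
      have hc : ContinuousAt (fun x => ‖D3 x‖) 0 := (hD3c.norm).continuousAt
      exact hc.eventually_lt continuousAt_const (by simp [hCdef])
    rcases Metric.eventually_nhds_iff_ball.mp h1 with ⟨r, hr, h⟩
    exact ⟨r, hr, h⟩
  set δ : ℝ := r / 2 with hδdef
  have hδpos : 0 < δ := by positivity
  have hδball : Metric.closedBall (0 : E) δ ⊆ Metric.ball (0 : E) r := by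
    apply Metric.closedBall_subset_ball; simp [hδdef]; linarith
  have hD3bound : ∀ x ∈ Metric.closedBall (0 : E) δ, ‖D3 x‖ ≤ C := fun x hx =>
    le_of_lt (hball x (hδball hx))
  have hconv : Convex ℝ (Metric.closedBall (0 : E) δ) := convex_closedBall _ _
  -- `D2` is `C`-Lipschitz on the ball
  have hLip : ∀ x ∈ Metric.closedBall (0 : E) δ, ‖D2 x - D2 0‖ ≤ C * ‖x‖ := by
    intro x hx
    have h0 : (0 : E) ∈ Metric.closedBall (0 : E) δ := Metric.mem_closedBall_self hδpos.le
    have := hconv.norm_image_sub_le_of_norm_hasFDerivWithin_le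
      (𝕜 := ℝ) (f := D2) (f' := D3) (fun y hy => (hD2d y).hasFDerivWithinAt) hD3bound h0 hx
    simpa using this
  -- first-order Taylor bound for `D1`
  have he : ∀ x ∈ Metric.closedBall (0 : E) δ, ‖D1 x - D1 0 - D2 0 x‖ ≤ C * ‖x‖ ^ 2 := by
    intro x hx
    have hxδ : ‖x‖ ≤ δ := by simpa [Metric.mem_closedBall] using hx
    have hsub : Metric.closedBall (0 : E) ‖x‖ ⊆ Metric.closedBall (0 : E) δ :=
      Metric.closedBall_subset_closedBall hxδ
    have hmvt := (convex_closedBall (0 : E) ‖x‖).norm_image_sub_le_of_norm_hasFDerivWithin_le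
      (f := fun y => D1 y - D2 0 y) (f' := fun y => D2 y - D2 0) (C := C * ‖x‖)
      (fun y hy => ((hD1d y).sub ((D2 0).hasFDerivAt)).hasFDerivWithinAt)
      (fun y hy => by
        have hy' : ‖y‖ ≤ ‖x‖ := by simpa [Metric.mem_closedBall] using hy
        calc ‖D2 y - D2 0‖ ≤ C * ‖y‖ := hLip y (hsub hy)
          _ ≤ C * ‖x‖ := by gcongr)
      (Metric.mem_closedBall_self (norm_nonneg x))
      (mem_closedBall_zero_iff.mpr le_rfl)
    have : ‖D1 x - D2 0 x - (D1 0 - D2 0 0)‖ ≤ C * ‖x‖ * ‖x - 0‖ := by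
      simpa using hmvt
    calc ‖D1 x - D1 0 - D2 0 x‖ = ‖D1 x - D2 0 x - (D1 0 - D2 0 0)‖ := by
          rw [map_zero]; abel_nf
      _ ≤ C * ‖x‖ * ‖x - 0‖ := this
      _ = C * ‖x‖ ^ 2 := by rw [sub_zero]; ring
  -- symmetry of the second derivative
  have hsymm : ∀ v w : E, D2 0 v w = D2 0 w v := fun v w =>
    second_derivative_symmetric hgd (hD1d 0) v w
  -- derivative of the quadratic correction
  have hquad : ∀ x : E, HasFDerivAt (fun y : E => D2 0 y y) (D2 0 x + D2 0 x) x := by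
    intro x
    have h1 : HasFDerivAt (fun y : E => D2 0 y) (D2 0) x := (D2 0).hasFDerivAt
    have h2 := h1.clm_apply (hasFDerivAt_id x)
    have hflip : (D2 0).flip x = D2 0 x := by
      ext w; simp [ContinuousLinearMap.flip_apply, hsymm w x]
    have hcomp : (D2 0 x).comp (ContinuousLinearMap.id ℝ E) = D2 0 x := by ext w; simp
    simp only [id_eq] at h2
    rw [hcomp, hflip] at h2
    simpa using h2
  -- the auxiliary function `q`
  set q : E → F := fun x => g x - D1 0 x - (1 / 2 : ℝ) • (D2 0 x x) with hqdef
  have hq : ∀ x : E, HasFDerivAt q (D1 x - D1 0 - D2 0 x) x := by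
    intro x
    have h1 := ((hgd x).sub ((D1 0).hasFDerivAt)).sub ((hquad x).const_smul (1 / 2 : ℝ))
    have : (1 / 2 : ℝ) • (D2 0 x + D2 0 x) = D2 0 x := by
      ext w
      simp only [ContinuousLinearMap.smul_apply, ContinuousLinearMap.add_apply]
      rw [← two_smul ℝ (D2 0 x w), smul_smul]; norm_num
    rwa [this] at h1
  -- Taylor bound for `q`
  have hqbound : ∀ u ∈ Metric.closedBall (0 : E) δ, ‖q u - q 0‖ ≤ C * ‖u‖ ^ 2 * ‖u‖ := by
    intro u hu
    have huδ : ‖u‖ ≤ δ := by simpa [Metric.mem_closedBall] using hu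
    have hsub : Metric.closedBall (0 : E) ‖u‖ ⊆ Metric.closedBall (0 : E) δ :=
      Metric.closedBall_subset_closedBall huδ
    have hmvt := (convex_closedBall (0 : E) ‖u‖).norm_image_sub_le_of_norm_hasFDerivWithin_le
      (f := q) (f' := fun y => D1 y - D1 0 - D2 0 y) (C := C * ‖u‖ ^ 2)
      (fun y hy => (hq y).hasFDerivWithinAt)
      (fun y hy => by
        have hy' : ‖y‖ ≤ ‖u‖ := by simpa [Metric.mem_closedBall] using hy
        calc ‖D1 y - D1 0 - D2 0 y‖ ≤ C * ‖y‖ ^ 2 := he y (hsub hy)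
          _ ≤ C * ‖u‖ ^ 2 := by gcongr)
      (Metric.mem_closedBall_self (norm_nonneg u))
      (mem_closedBall_zero_iff.mpr le_rfl)
    simpa using hmvt
  -- assemble
  rw [Asymptotics.isBigO_iff]
  refine ⟨C + C, ?_⟩
  filter_upwards [Metric.closedBall_mem_nhds (0 : E) hδpos] with u hu
  have hq0 : q 0 = g 0 := by simp [hqdef]
  have key : g u - g 0 - (1 / 2 : ℝ) • (D1 u u + D1 0 u) =
      (q u - q 0) - (1 / 2 : ℝ) • ((D1 u - D1 0 - D2 0 u) u) := by
    rw [hq0, hqdef]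
    simp only [ContinuousLinearMap.sub_apply]
    module
  rw [key]
  have h1 : ‖q u - q 0‖ ≤ C * ‖u‖ ^ 3 := by
    calc ‖q u - q 0‖ ≤ C * ‖u‖ ^ 2 * ‖u‖ := hqbound u hu
      _ = C * ‖u‖ ^ 3 := by ring
  have h2 : ‖(1 / 2 : ℝ) • ((D1 u - D1 0 - D2 0 u) u)‖ ≤ C * ‖u‖ ^ 3 := by
    rw [norm_smul]
    have hn : ‖(1 / 2 : ℝ)‖ ≤ 1 := by
      rw [Real.norm_eq_abs, abs_of_nonneg] <;> norm_num
    have hX : ‖(D1 u - D1 0 - D2 0 u) u‖ ≤ C * ‖u‖ ^ 3 := by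
      calc ‖(D1 u - D1 0 - D2 0 u) u‖ ≤ ‖D1 u - D1 0 - D2 0 u‖ * ‖u‖ :=
            ContinuousLinearMap.le_opNorm _ _
        _ ≤ (C * ‖u‖ ^ 2) * ‖u‖ := by gcongr; exact he u hu
        _ = C * ‖u‖ ^ 3 := by ring
    calc ‖(1 / 2 : ℝ)‖ * ‖(D1 u - D1 0 - D2 0 u) u‖
        ≤ 1 * (C * ‖u‖ ^ 3) := mul_le_mul hn hX (norm_nonneg _) (by norm_num)
      _ = C * ‖u‖ ^ 3 := by ring
  calc ‖(q u - q 0) - (1 / 2 : ℝ) • ((D1 u - D1 0 - D2 0 u) u)‖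
      ≤ ‖q u - q 0‖ + ‖(1 / 2 : ℝ) • ((D1 u - D1 0 - D2 0 u) u)‖ := norm_sub_le _ _
    _ ≤ C * ‖u‖ ^ 3 + C * ‖u‖ ^ 3 := add_le_add h1 h2
    _ = (C + C) * ‖‖u‖ ^ 3‖ := by
        rw [Real.norm_of_nonneg (by positivity)]; ring


/-- For an equivariant output, the output residual
`ỹ(ε) = h(φ(exp(ε∧)X̂, ξ0)) − h(φ(X̂, ξ0))` admits the second-order-accurate
linearisation
`ỹ = (1/2)( D_{E|id}ρ(E, y) + D_{E|id}ρ(E, ŷ) ) Ad_{X̂⁻¹} ε∧ + O(|ε|³)`,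
where `y = h(ξ)` is the (measured) output at `ξ = φ(exp(ε∧)X̂, ξ0)` and
`ŷ = h(φ(X̂, ξ0))`. -/
theorem equivariant_output_linearisation
    {G : Type*} [Group G] {M : Type*} {m n : ℕ}
    -- the Lie algebra of `G`, identified with a normed vector space
    {𝔤 : Type*} [NormedAddCommGroup 𝔤] [NormedSpace ℝ 𝔤]
    -- the state action
    (φ : G → M → M)
    (hφ_id : ∀ ξ : M, φ 1 ξ = ξ)
    (hφ_comp : ∀ (X Y : G) (ξ : M), φ Y (φ X ξ) = φ (X * Y) ξ)
    (hφ_trans : ∀ ξ ξ' : M, ∃ X : G, φ X ξ = ξ')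
    -- the output action on the output space `ℝⁿ`
    (ρ : G → EuclideanSpace ℝ (Fin n) → EuclideanSpace ℝ (Fin n))
    (hρ_id : ∀ y, ρ 1 y = y)
    (hρ_comp : ∀ (X Y : G) (y), ρ Y (ρ X y) = ρ (X * Y) y)
    -- the equivariant output
    (h : M → EuclideanSpace ℝ (Fin n))
    (h_equivariant : ∀ (X : G) (ξ : M), ρ X (h ξ) = h (φ X ξ))
    -- the exponential map and the adjoint action, with their standard properties
    (expG : 𝔤 → G) (Ad : G → 𝔤 →ₗ[ℝ] 𝔤)
    (hexp_zero : expG 0 = 1)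
    (hexp_add : ∀ (s t : ℝ) (v : 𝔤), expG ((s + t) • v) = expG (s • v) * expG (t • v))
    (hAd : ∀ (X : G) (v : 𝔤), expG (Ad X v) = X * expG v * X⁻¹)
    -- smoothness of the output action in exponential coordinates
    (hsmooth : ContDiff ℝ (⊤ : ℕ∞) (fun p : 𝔤 × EuclideanSpace ℝ (Fin n) => ρ (expG p.1) p.2))
    -- the identification `∧ : ℝ^m → 𝔪 ⊂ 𝔤` of normal coordinates
    (wedge : EuclideanSpace ℝ (Fin m) →ₗ[ℝ] 𝔤)
    -- the observer state and the origin
    (Xhat : G) (ξ0 : M) :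
    -- the residual minus the equivariant linearisation is `O(|ε|³)` as `ε → 0`
    (fun ε : EuclideanSpace ℝ (Fin m) =>
        (h (φ Xhat (φ (expG (wedge ε)) ξ0)) - h (φ Xhat ξ0)) -
        (1 / 2 : ℝ) •
          (fderiv ℝ (fun v : 𝔤 => ρ (expG v) (h (φ Xhat (φ (expG (wedge ε)) ξ0)))) 0
              (Ad Xhat⁻¹ (wedge ε)) +
            fderiv ℝ (fun v : 𝔤 => ρ (expG v) (h (φ Xhat ξ0))) 0
              (Ad Xhat⁻¹ (wedge ε))))
      =O[𝓝 0] (fun ε => ‖ε‖ ^ 3) := by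
  -- notation
  set yhat : EuclideanSpace ℝ (Fin n) := h (φ Xhat ξ0) with hyhat
  set g : 𝔤 → EuclideanSpace ℝ (Fin n) := fun v => ρ (expG v) yhat with hgdef
  have hg : ContDiff ℝ (⊤ : ℕ∞) g := hsmooth.comp (contDiff_id.prodMk contDiff_const)
  have hg0 : g 0 = yhat := by rw [hgdef]; simp only [hexp_zero, hρ_id]
  -- Step 1: the residual term is `g (Ad Xhat⁻¹ w)`
  have key1 : ∀ w : 𝔤, h (φ Xhat (φ (expG w) ξ0)) = g (Ad Xhat⁻¹ w) := by
    intro w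
    have e2 : expG (Ad Xhat⁻¹ w) = Xhat⁻¹ * expG w * Xhat := by
      have := hAd Xhat⁻¹ w; rwa [inv_inv] at this
    have e3 : expG w * Xhat = Xhat * expG (Ad Xhat⁻¹ w) := by rw [e2]; group
    rw [hφ_comp, e3, ← hφ_comp Xhat (expG (Ad Xhat⁻¹ w)) ξ0, ← h_equivariant]
  -- Step 2: the first linearisation term is `fderiv ℝ g w w` (group-law derivative identity)
  have key2 : ∀ w : 𝔤, fderiv ℝ (fun v : 𝔤 => ρ (expG v) (g w)) 0 w = fderiv ℝ g w w := by
    intro w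
    have hgw : ContDiff ℝ (⊤ : ℕ∞) (fun v : 𝔤 => ρ (expG v) (g w)) :=
      hsmooth.comp (contDiff_id.prodMk contDiff_const)
    -- curve `t ↦ (1+t) • w`
    have hc1 : HasDerivAt (fun t : ℝ => (1 + t) • w) w 0 := by
      have h1 : HasDerivAt (fun t : ℝ => 1 + t) 1 0 := (hasDerivAt_id 0).const_add 1
      simpa using h1.smul_const w
    have ha : HasDerivAt (fun t : ℝ => g ((1 + t) • w)) (fderiv ℝ g w w) 0 := by
      have hgd : HasFDerivAt g (fderiv ℝ g w) w := (hg.differentiable (by simp) w).hasFDerivAt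
      have hgd' : HasFDerivAt g (fderiv ℝ g w) ((1 + (0 : ℝ)) • w) := by
        simpa using hgd
      exact hgd'.comp_hasDerivAt 0 hc1
    have hc0 : HasDerivAt (fun t : ℝ => t • w) w 0 := by
      simpa using (hasDerivAt_id (0 : ℝ)).smul_const w
    have hb : HasDerivAt (fun t : ℝ => ρ (expG (t • w)) (g w))
        (fderiv ℝ (fun v : 𝔤 => ρ (expG v) (g w)) 0 w) 0 := by
      have hd : HasFDerivAt (fun v : 𝔤 => ρ (expG v) (g w))
          (fderiv ℝ (fun v : 𝔤 => ρ (expG v) (g w)) 0) ((0 : ℝ) • w) := by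
        simpa using (hgw.differentiable (by simp) 0).hasFDerivAt
      exact hd.comp_hasDerivAt 0 hc0
    have heq : (fun t : ℝ => g ((1 + t) • w)) = fun t : ℝ => ρ (expG (t • w)) (g w) := by
      funext t
      rw [hgdef]
      simp only
      rw [hexp_add 1 t w, one_smul, ← hρ_comp]
    rw [heq] at ha
    exact (ha.unique hb).symm
  -- the linear map `ε ↦ Ad Xhat⁻¹ (wedge ε)` as a continuous linear map
  set A : EuclideanSpace ℝ (Fin m) →L[ℝ] 𝔤 :=
    LinearMap.toContinuousLinearMap ((Ad Xhat⁻¹).comp wedge) with hAdef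
  have hAapp : ∀ ε, A ε = Ad Xhat⁻¹ (wedge ε) := fun ε => rfl
  -- rewrite the goal function through `g` and `A`
  have hfun : (fun ε : EuclideanSpace ℝ (Fin m) =>
        (h (φ Xhat (φ (expG (wedge ε)) ξ0)) - h (φ Xhat ξ0)) -
        (1 / 2 : ℝ) •
          (fderiv ℝ (fun v : 𝔤 => ρ (expG v) (h (φ Xhat (φ (expG (wedge ε)) ξ0)))) 0
              (Ad Xhat⁻¹ (wedge ε)) +
            fderiv ℝ (fun v : 𝔤 => ρ (expG v) (h (φ Xhat ξ0))) 0
              (Ad Xhat⁻¹ (wedge ε)))) =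
      (fun u : 𝔤 => g u - g 0 - (1 / 2 : ℝ) • (fderiv ℝ g u u + fderiv ℝ g 0 u)) ∘
        fun ε => A ε := by
    funext ε
    simp only [Function.comp_apply, hAapp, key1 (wedge ε), key2 (Ad Xhat⁻¹ (wedge ε)), hg0]
    rfl
  rw [hfun]
  -- conclude by the trapezoidal estimate and linearity
  have hbigO := trapezoid_isBigO hg
  have htend : Filter.Tendsto (fun ε : EuclideanSpace ℝ (Fin m) => A ε) (𝓝 0) (𝓝 0) := by
    have := A.continuous.tendsto 0
    simpa using this
  have h1 := hbigO.comp_tendsto htend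
  have h2 : ((fun u : 𝔤 => ‖u‖ ^ 3) ∘ fun ε => A ε) =O[𝓝 (0 : EuclideanSpace ℝ (Fin m))]
      (fun ε => ‖ε‖ ^ 3) := by
    rw [Asymptotics.isBigO_iff]
    refine ⟨‖A‖ ^ 3, Filter.Eventually.of_forall fun ε => ?_⟩
    simp only [Function.comp_apply]
    rw [Real.norm_of_nonneg (by positivity), Real.norm_of_nonneg (by positivity)]
    calc ‖A ε‖ ^ 3 ≤ (‖A‖ * ‖ε‖) ^ 3 := by
          gcongr
          exact A.le_opNorm ε
      _ = ‖A‖ ^ 3 * ‖ε‖ ^ 3 := by ring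
  exact h1.trans h2
end
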